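/- arXiv:1705.02501 — 4 statements merged into one kernel-verified Lean document; each statement's English description precedes it below -/
import Mathlib

section
/- Let (ξ_n) be a sequence of complex-valued random variables on a probability space with sup_n ‖ξ_n‖_∞ < ∞. If ∑_{n≥1} E|ξ_0 + ξ_1 + ⋯ + ξ_{n-1}|² / n³ < ∞, then almost surely (1/n)·∑_{k=0}^{n-1} ξ_k → 0 as n → ∞. -/
/-!
Put `a n = ‖ξ₀ + ⋯ + ξₙ₋₁‖`. By Tonelli the hypothesis makes `∑ aₙ² / n³` finite almost surely,
and `aₙ₊₁ ≥ aₙ - B` holds almost surely. For such a path, `aₙ ≥ εn` forces `aₘ ≥ εn / 2` for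
all `m ≤ n + εn / (2B)`, a block of about `εn / (2B)` indices on which `aₘ² / m³ ≳ ε² / n`.
Each such block contributes `≳ ε³ / B` to the convergent series, so this happens only finitely
often, i.e. `aₙ / n → 0`.
-/

open MeasureTheory Filter Finset

open scoped Topology

namespace DavenportErdosLeVeque

section RealSequence

variable {a : ℕ → ℝ} {B : ℝ}

lemma sub_mul_le_of_forall_sub_le_succ (hstep : ∀ n, a n - B ≤ a (n + 1)) (N j : ℕ) :
    a N - j * B ≤ a (N + j) := by
  induction j with
  | zero => simp
  | succ j ih =>
    rw [← add_assoc]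
    push_cast
    linarith [hstep (N + j)]

lemma le_sum_Ico_sq_div_cube (hstep : ∀ n, a n - B ≤ a (n + 1)) (hB : 0 < B) {ε : ℝ}
    (hε : 0 < ε) (hεB : ε ≤ B) {N : ℕ} (hN : 0 < N) (haN : ε * N ≤ a N) :
    ε ^ 3 / (64 * B) ≤
      ∑ n ∈ Ico N (N + ⌊ε * N / (2 * B)⌋₊ + 1), a n ^ 2 / (n : ℝ) ^ 3 := by
  set M := ⌊ε * N / (2 * B)⌋₊
  have hN' : (0 : ℝ) < N := by exact_mod_cast hN
  have hM : (M : ℝ) ≤ ε * N / (2 * B) := Nat.floor_le (by positivity)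
  have hM' : ε * N / (2 * B) < M + 1 := Nat.lt_floor_add_one _
  have hterm : ∀ n ∈ Ico N (N + M + 1), ε ^ 2 / (32 * N) ≤ a n ^ 2 / (n : ℝ) ^ 3 := by
    intro n hn
    obtain ⟨j, rfl, hjM⟩ : ∃ j, n = N + j ∧ j ≤ M := ⟨n - N, by grind⟩
    have hjB : j * B ≤ ε * N / 2 := by
      have : (j : ℝ) ≤ ε * N / (2 * B) := (Nat.cast_le.2 hjM).trans hM
      rw [le_div_iff₀ (by positivity)] at this
      linarith
    have haj : ε * N / 2 ≤ a (N + j) := by linarith [sub_mul_le_of_forall_sub_le_succ hstep N j]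
    have hj : (N + j : ℝ) ≤ 2 * N := by nlinarith
    calc ε ^ 2 / (32 * N) = (ε * N / 2) ^ 2 / (2 * N) ^ 3 := by field_simp; ring
      _ ≤ a (N + j) ^ 2 / ((N + j : ℕ) : ℝ) ^ 3 := by
        push_cast
        gcongr
  calc ε ^ 3 / (64 * B) ≤ (M + 1) * (ε ^ 2 / (32 * N)) := by
        rw [div_lt_iff₀ (by positivity)] at hM'
        rw [div_le_iff₀ (by positivity)]
        field_simp
        nlinarith [sq_nonneg ε]
    _ = #(Ico N (N + M + 1)) • (ε ^ 2 / (32 * N)) := by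
        simp [nsmul_eq_mul, add_assoc, add_tsub_cancel_left]
    _ ≤ _ := card_nsmul_le_sum _ _ _ hterm

theorem tendsto_div_of_summable_sq_div_cube (ha : ∀ n, 0 ≤ a n)
    (hstep : ∀ n, a n - B ≤ a (n + 1))
    (hsum : Summable fun n : ℕ => a n ^ 2 / (n : ℝ) ^ 3) :
    Tendsto (fun n => a n / n) atTop (𝓝 0) := by
  set B' := max B 1
  have hB' : 0 < B' := lt_max_of_lt_right one_pos
  have hstep' : ∀ n, a n - B' ≤ a (n + 1) := fun n => by linarith [hstep n, le_max_left B 1]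
  rw [Metric.tendsto_atTop]
  intro ε hε
  set ε' := min ε B'
  have hε' : 0 < ε' := lt_min hε hB'
  obtain ⟨s, hs⟩ := hsum.vanishing (Iio_mem_nhds (by positivity : 0 < ε' ^ 3 / (64 * B')))
  refine ⟨s.sup id + 1, fun N hN => ?_⟩
  have hN : 0 < N := by omega
  rw [Real.dist_eq, sub_zero, abs_of_nonneg (div_nonneg (ha N) N.cast_nonneg)]
  by_contra! hbig
  have haN : ε' * N ≤ a N := by
    rw [le_div_iff₀ (by exact_mod_cast hN)] at hbig
    nlinarith [min_le_left ε B', (Nat.cast_nonneg N : (0 : ℝ) ≤ N)]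
  have hdisj : Disjoint (Ico N (N + ⌊ε' * N / (2 * B')⌋₊ + 1)) s := by
    refine disjoint_left.2 fun n hn hns => ?_
    have := le_sup (f := id) hns
    grind
  exact (hs _ hdisj).not_ge
    (le_sum_Ico_sq_div_cube hstep' hB' hε' (min_le_right _ _) hN haN)

end RealSequence

theorem tendsto_inv_smul_of_norm_sub_le {𝕜 E : Type*} [RCLike 𝕜] [NormedAddCommGroup E]
    [NormedSpace 𝕜 E] {S : ℕ → E} {B : ℝ} (hS : ∀ n, ‖S (n + 1) - S n‖ ≤ B)
    (hsum : Summable fun n : ℕ => ‖S n‖ ^ 2 / (n : ℝ) ^ 3) :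
    Tendsto (fun n : ℕ => (n : 𝕜)⁻¹ • S n) atTop (𝓝 0) := by
  rw [tendsto_zero_iff_norm_tendsto_zero]
  have hstep (n : ℕ) : ‖S n‖ - B ≤ ‖S (n + 1)‖ := by
    linarith [norm_sub_norm_le (S n) (S (n + 1)), norm_sub_rev (S n) (S (n + 1)), hS n]
  simpa [norm_smul, div_eq_inv_mul] using
    tendsto_div_of_summable_sq_div_cube (fun n => norm_nonneg (S n)) hstep hsum

theorem ae_summable_norm_of_summable_integral_norm {Ω E : Type*} [MeasurableSpace Ω]
    {μ : Measure Ω} [NormedAddCommGroup E] {f : ℕ → Ω → E} (hf : ∀ n, Integrable (f n) μ)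
    (hsum : Summable fun n => ∫ ω, ‖f n ω‖ ∂μ) :
    ∀ᵐ ω ∂μ, Summable fun n => ‖f n ω‖ := by
  refine summable_norm_of_tsum_eLpNorm_ne_top le_rfl (fun n => (hf n).aestronglyMeasurable) ?_
  simp_rw [eLpNorm_one_eq_lintegral_enorm, ← ofReal_integral_norm_eq_lintegral_enorm (hf _)]
  rw [← ENNReal.ofReal_tsum_of_nonneg (fun n => integral_nonneg fun _ => norm_nonneg _) hsum]
  exact ENNReal.ofReal_ne_top

end DavenportErdosLeVeque

open DavenportErdosLeVeque in
/-- Davenport–Erdős–LeVeque theorem. -/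
theorem davenport_erdos_leveque
    {Ω : Type*} [MeasurableSpace Ω] (μ : Measure Ω) [IsProbabilityMeasure μ]
    (ξ : ℕ → Ω → ℂ) (hmeas : ∀ n, Measurable (ξ n))
    (B : ℝ) (hbd : ∀ n, ∀ᵐ ω ∂μ, ‖ξ n ω‖ ≤ B)
    (hsum : Summable fun n : ℕ =>
      (∫ ω, ‖∑ k ∈ Finset.range (n + 1), ξ k ω‖ ^ 2 ∂μ) / ((n : ℝ) + 1) ^ 3) :
    ∀ᵐ ω ∂μ, Tendsto (fun n : ℕ => (n : ℂ)⁻¹ • ∑ k ∈ Finset.range n, ξ k ω)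
      atTop (nhds 0) := by
  have hLinfty (k : ℕ) : MemLp (ξ k) ⊤ μ :=
    memLp_top_of_bound (hmeas k).aestronglyMeasurable B (hbd k)
  have hL2 (n : ℕ) : MemLp (fun ω => ∑ k ∈ range n, ξ k ω) (2 : ℕ) μ :=
    (memLp_finsetSum _ fun k _ => hLinfty k).mono_exponent le_top
  have hpath : ∀ᵐ ω ∂μ, Summable fun n : ℕ =>
      ‖‖∑ k ∈ range (n + 1), ξ k ω‖ ^ 2 / ((n : ℝ) + 1) ^ 3‖ :=
    ae_summable_norm_of_summable_integral_norm
      (fun n => (hL2 (n + 1)).integrable_norm_pow'.div_const _)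
      (by simpa [integral_div, fun n : ℕ => abs_of_pos (Nat.cast_add_one_pos (α := ℝ) n)]
        using hsum)
  filter_upwards [ae_all_iff.2 hbd, hpath] with ω hξ hω
  refine tendsto_inv_smul_of_norm_sub_le (fun n => by simpa [sum_range_succ] using hξ n) ?_
  exact (summable_nat_add_iff 1).1 (by simpa using hω.of_norm)
end

section
/- Let (X, 𝓑, ν, T) be a measure-preserving dynamical system and f ∈ L^∞(ν). Let (w_n) be a bounded sequence of complex numbers such that ∑_{n≥1} (1/n³)·max_{0≤t≤1}|∑_{k=0}^{n-1} w_k e^{2πi k t}|² < ∞. Then for ν-almost every x, (1/N)·∑_{n=0}^{N-1} w_n f(T^n x) → 0 as N → ∞. -/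
open MeasureTheory Filter Finset Real Set

/-!
Write `S_N(x) = ∑_{k<N} w_k f(T^k x)`. For a finite sequence `g`, the `m`-th Fourier coefficient of
`(∑_k w_k e(-kt)) (∑_j g_j e(jt))` is `∑_k w_k g_{m+k}`, so Bessel's inequality and Parseval give
`∑_{m<L} |∑_{k<N} w_k g_{m+k}|² ≤ max_t |∑_{k<N} w_k e(kt)|² · ∑_{j<L+N} |g_j|²`. Taking
`g_j = f(T^j x)`, integrating, and using invariance of `ν` gives
`L ‖S_N‖₂² ≤ (L + N) max_t |∑_{k<N} w_k e(kt)|² ‖f‖₂²`; letting `L → ∞` yields the spectral lemma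
without spectral measures. The DEL condition then makes `∑_N |S_N(x)|² / N³` integrable, hence
finite almost everywhere. Finally `|S_N(x)|` grows by at most `sup |w| · sup |f|` per step, so a
value `|S_n(x)| ≥ ε n` persists on a window of length `≍ ε n` below `n`, contributing `≳ ε³` to
that series; hence such `n` are finitely many.
-/

section Fourier

open AddCircle

variable {T : ℝ} [Fact (0 < T)]

theorem Continuous.integrable_haarAddCircle {E : Type*} [NormedAddCommGroup E]
    {F : AddCircle T → E} (hF : Continuous F) : Integrable F haarAddCircle :=
  hF.integrable_of_hasCompactSupport (.of_compactSpace F)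

theorem hasSum_sq_fourierCoeff_continuousMap (F : C(AddCircle T, ℂ)) :
    HasSum (fun n => ‖fourierCoeff F n‖ ^ 2) (∫ t, ‖F t‖ ^ 2 ∂haarAddCircle) := by
  have h := hasSum_sq_fourierCoeff (ContinuousMap.toLp (E := ℂ) 2 haarAddCircle ℂ F)
  simp_rw [fourierCoeff_toLp] at h
  convert h using 1
  refine integral_congr_ae ?_
  filter_upwards [ContinuousMap.coeFn_toLp (E := ℂ) (p := 2) (𝕜 := ℂ) haarAddCircle F] with t ht
  rw [ht]

theorem fourierCoeff_sum_smul_fourier (s : Finset ℤ) (c : ℤ → ℂ) (n : ℤ) :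
    fourierCoeff ⇑(∑ j ∈ s, c j • fourier j : C(AddCircle T, ℂ)) n = if n ∈ s then c n else 0 := by
  rw [ContinuousMap.coe_sum, fourierCoeff.sum _ _ fun j _ =>
    (map_continuous _).integrable_haarAddCircle]
  simp [fourierCoeff.const_smul, fourierCoeff_fourier, Pi.single_apply]

theorem integral_norm_sq_sum_smul_fourier (s : Finset ℤ) (c : ℤ → ℂ) :
    ∫ t, ‖(∑ j ∈ s, c j • fourier j : C(AddCircle T, ℂ)) t‖ ^ 2 ∂haarAddCircle
      = ∑ j ∈ s, ‖c j‖ ^ 2 := by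
  refine (hasSum_sq_fourierCoeff_continuousMap _).unique ?_
  simp_rw [fourierCoeff_sum_smul_fourier]
  convert hasSum_sum_of_ne_finset_zero (f := fun n => ‖if n ∈ s then c n else 0‖ ^ 2)
    (s := s) (L := .unconditional ℤ) (fun n hn => by simp [hn]) using 1
  exact (Finset.sum_congr rfl fun j hj => by simp [hj]).symm

theorem fourierCoeff_fourier_mul (F : AddCircle T → ℂ) (k n : ℤ) :
    fourierCoeff (fun t => fourier k t * F t) n = fourierCoeff F (n - k) := by
  simp only [fourierCoeff, smul_eq_mul, ← mul_assoc, ← fourier_add, neg_sub', sub_neg_eq_add]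

theorem sum_norm_sq_sum_mul_shift_le (w g : ℕ → ℂ) (N L : ℕ) {M : ℝ}
    (hM : ∀ τ : AddCircle T, ‖∑ k ∈ range N, w k * fourier (-(k : ℤ)) τ‖ ^ 2 ≤ M) :
    ∑ m ∈ range L, ‖∑ k ∈ range N, w k * g (m + k)‖ ^ 2
      ≤ M * ∑ j ∈ range (L + N), ‖g j‖ ^ 2 := by
  set W : C(AddCircle T, ℂ) := ∑ k ∈ range N, w k • fourier (-(k : ℤ))
  set s : Finset ℤ := (range (L + N)).map Nat.castEmbedding
  set G : C(AddCircle T, ℂ) := ∑ j ∈ s, g j.toNat • fourier j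
  have hG : ∀ j < L + N, fourierCoeff G j = g j := fun j hj => by
    rw [fourierCoeff_sum_smul_fourier]
    simp [s, hj]
  have hWG : ∀ m < L, fourierCoeff ⇑(W * G) m = ∑ k ∈ range N, w k * g (m + k) := by
    intro m hm
    have hsum : ⇑(W * G) = ∑ k ∈ range N, fun t => w k * (fourier (-(k : ℤ)) t * G t) := by
      ext t; simp [W, Finset.sum_mul]
    rw [hsum, fourierCoeff.sum, Finset.sum_apply]
    · refine Finset.sum_congr rfl fun k hk => ?_
      rw [fourierCoeff.const_mul, fourierCoeff_fourier_mul, sub_neg_eq_add, ← Nat.cast_add,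
        hG _ (by simp at hk; omega)]
    · exact fun k _ => (by fun_prop : Continuous _).integrable_haarAddCircle
  calc ∑ m ∈ range L, ‖∑ k ∈ range N, w k * g (m + k)‖ ^ 2
      = ∑ m ∈ (range L).map Nat.castEmbedding, ‖fourierCoeff ⇑(W * G) m‖ ^ 2 := by
        rw [Finset.sum_map]
        exact Finset.sum_congr rfl fun m hm => by
          rw [Nat.castEmbedding_apply, hWG m (by simpa using hm)]
    _ ≤ ∫ t, ‖(W * G) t‖ ^ 2 ∂haarAddCircle :=
        sum_le_hasSum _ (fun _ _ => sq_nonneg _) (hasSum_sq_fourierCoeff_continuousMap _)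
    _ ≤ ∫ t, M * ‖G t‖ ^ 2 ∂haarAddCircle := by
        refine integral_mono ?_ ?_ fun t => ?_
        · exact (by fun_prop : Continuous _).integrable_haarAddCircle
        · exact (by fun_prop : Continuous _).integrable_haarAddCircle
        · rw [ContinuousMap.mul_apply, norm_mul, mul_pow]
          refine mul_le_mul_of_nonneg_right ?_ (sq_nonneg _)
          simpa [W] using hM t
    _ = M * ∑ j ∈ range (L + N), ‖g j‖ ^ 2 := by
        rw [integral_const_mul, integral_norm_sq_sum_smul_fourier, Finset.sum_map]
        simp

end Fourier

theorem le_of_forall_natCast_mul_le_mul_add {a b c : ℝ} (h : ∀ L : ℕ, L * a ≤ L * b + c) :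
    a ≤ b := by
  by_contra! hba
  obtain ⟨L, hL⟩ := exists_nat_gt (c / (a - b))
  rw [div_lt_iff₀ (sub_pos.2 hba)] at hL
  linarith [h L]

theorem MeasureTheory.MeasurePreserving.integral_comp_of_aestronglyMeasurable {X Y E : Type*}
    [MeasurableSpace X] [MeasurableSpace Y] [NormedAddCommGroup E] [NormedSpace ℝ E]
    {μ : Measure X} {ν : Measure Y} {T : X → Y} (hT : MeasurePreserving T μ ν) {g : Y → E}
    (hg : AEStronglyMeasurable g ν) : ∫ x, g (T x) ∂μ = ∫ y, g y ∂ν := by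
  rw [← hT.map_eq] at hg ⊢
  exact (integral_map hT.aemeasurable hg).symm

theorem memLp_sum_mul_iterate {X : Type*} [MeasurableSpace X] {μ : Measure X} {T : X → X}
    (hT : MeasurePreserving T μ μ) {f : X → ℂ} {p : ENNReal} (hf : MemLp f p μ) (w : ℕ → ℂ)
    (N : ℕ) : MemLp (fun x => ∑ k ∈ range N, w k * f (T^[k] x)) p μ :=
  memLp_finsetSum _ fun k _ => (hf.comp_measurePreserving (hT.iterate k)).const_mul (w k)

theorem integral_norm_sq_sum_mul_iterate_le {X : Type*} [MeasurableSpace X] {μ : Measure X}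
    {T : X → X} (hT : MeasurePreserving T μ μ) {f : X → ℂ} (hf : MemLp f 2 μ) (w : ℕ → ℂ) (N : ℕ)
    {p : ℝ} [Fact (0 < p)] {M : ℝ}
    (hM : ∀ τ : AddCircle p, ‖∑ k ∈ range N, w k * fourier (-(k : ℤ)) τ‖ ^ 2 ≤ M) :
    ∫ x, ‖∑ k ∈ range N, w k * f (T^[k] x)‖ ^ 2 ∂μ ≤ M * ∫ x, ‖f x‖ ^ 2 ∂μ := by
  set S : X → ℂ := fun x => ∑ k ∈ range N, w k * f (T^[k] x)
  have hfT : ∀ j, MemLp (fun x => f (T^[j] x)) 2 μ := fun j =>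
    hf.comp_measurePreserving (hT.iterate j)
  have hS : MemLp S 2 μ := memLp_sum_mul_iterate hT hf w N
  have hST : ∀ m, MemLp (fun x => S (T^[m] x)) 2 μ := fun m =>
    hS.comp_measurePreserving (hT.iterate m)
  have hpointwise : ∀ L x, ∑ m ∈ range L, ‖S (T^[m] x)‖ ^ 2
      ≤ M * ∑ j ∈ range (L + N), ‖f (T^[j] x)‖ ^ 2 := fun L x => by
    simpa only [S, ← Function.iterate_add_apply, add_comm]
      using sum_norm_sq_sum_mul_shift_le w (fun j => f (T^[j] x)) N L hM
  have hinv : ∀ {g : X → ℂ}, MemLp g 2 μ → ∀ m, ∫ x, ‖g (T^[m] x)‖ ^ 2 ∂μ = ∫ x, ‖g x‖ ^ 2 ∂μ :=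
    fun hg m => (hT.iterate m).integral_comp_of_aestronglyMeasurable
      (g := fun x => ‖_‖ ^ 2) hg.norm.integrable_sq.aestronglyMeasurable
  refine le_of_forall_natCast_mul_le_mul_add (c := N * (M * ∫ x, ‖f x‖ ^ 2 ∂μ)) fun L => ?_
  calc (L : ℝ) * ∫ x, ‖S x‖ ^ 2 ∂μ = ∑ m ∈ range L, ∫ x, ‖S (T^[m] x)‖ ^ 2 ∂μ := by
        simp [hinv hS]
    _ = ∫ x, ∑ m ∈ range L, ‖S (T^[m] x)‖ ^ 2 ∂μ :=
        (integral_finsetSum _ fun m _ => (hST m).norm.integrable_sq).symm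
    _ ≤ ∫ x, M * ∑ j ∈ range (L + N), ‖f (T^[j] x)‖ ^ 2 ∂μ :=
        integral_mono (integrable_finsetSum _ fun m _ => (hST m).norm.integrable_sq)
          ((integrable_finsetSum _ fun j _ => (hfT j).norm.integrable_sq).const_mul M)
          (hpointwise L)
    _ = L * (M * ∫ x, ‖f x‖ ^ 2 ∂μ) + N * (M * ∫ x, ‖f x‖ ^ 2 ∂μ) := by
        rw [integral_const_mul, integral_finsetSum _ fun j _ => (hfT j).norm.integrable_sq]
        simp only [hinv hf, sum_const, card_range, nsmul_eq_mul, Nat.cast_add]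
        ring

theorem exists_mem_Icc_fourier_neg_eq_exp (τ : AddCircle (1 : ℝ)) :
    ∃ t ∈ Icc (0 : ℝ) 1,
      ∀ k : ℕ, fourier (-(k : ℤ)) τ = Complex.exp (2 * π * Complex.I * k * t) := by
  refine ⟨AddCircle.equivIco 1 0 (-τ),
    Ico_subset_Icc_self (by simpa using (AddCircle.equivIco 1 0 (-τ)).2), fun k => ?_⟩
  rw [fourier_apply, neg_smul, ← smul_neg, ← AddCircle.coe_equivIco (a := 0) (y := -τ),
    ← fourier_apply, fourier_coe_apply]
  simp

theorem norm_sq_sum_mul_fourier_neg_le_iSup (w : ℕ → ℂ) (N : ℕ) (τ : AddCircle (1 : ℝ)) :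
    ‖∑ k ∈ range N, w k * fourier (-(k : ℤ)) τ‖ ^ 2
      ≤ ⨆ t : Icc (0 : ℝ) 1,
          ‖∑ k ∈ range N, w k * Complex.exp (2 * π * Complex.I * k * t.1)‖ ^ 2 := by
  obtain ⟨t, ht, hτ⟩ := exists_mem_Icc_fourier_neg_eq_exp τ
  refine le_ciSup_of_le (isCompact_range (by fun_prop)).bddAbove ⟨t, ht⟩ ?_
  simp only [hτ, le_refl]

theorem le_add_mul_of_forall_le_add {a : ℕ → ℝ} {C : ℝ} (h : ∀ n, a (n + 1) ≤ a n + C)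
    (m d : ℕ) : a (m + d) ≤ a m + C * d := by
  induction d with
  | zero => simp
  | succ d ih =>
    rw [← add_assoc]
    push_cast
    linarith [h (m + d)]

theorem natCast_mul_le_sum_Ico_sq_div_cube {a : ℕ → ℝ} {C ε : ℝ} (hC : 0 ≤ C) (hε : 0 ≤ ε)
    (hstep : ∀ n, a (n + 1) ≤ a n + C) {n K : ℕ} (hn : ε * n ≤ a n) (hKn : K ≤ n)
    (hK : C * K ≤ ε * n / 2) :
    K * (ε ^ 2 / (4 * n)) ≤ ∑ j ∈ Finset.Ico (n - K) n, a (j + 1) ^ 2 / ((j : ℝ) + 1) ^ 3 := by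
  rcases Nat.eq_zero_or_pos n with rfl | hn_pos
  · simp
  have hterm : ∀ j ∈ Finset.Ico (n - K) n, ε ^ 2 / (4 * n) ≤ a (j + 1) ^ 2 / ((j : ℝ) + 1) ^ 3 := by
    intro j hj
    rw [Finset.mem_Ico] at hj
    have hchain := le_add_mul_of_forall_le_add hstep (j + 1) (n - (j + 1))
    rw [Nat.add_sub_cancel' (by omega), Nat.cast_sub (by omega)] at hchain
    have hj_le : ((j : ℝ) + 1) ≤ n := by exact_mod_cast hj.2
    have hgap : (n : ℝ) - ((j + 1 : ℕ) : ℝ) ≤ K := by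
      rw [sub_le_iff_le_add]; exact_mod_cast (by omega : n ≤ K + (j + 1))
    have ha_ge : ε * n / 2 ≤ a (j + 1) := by nlinarith [mul_le_mul_of_nonneg_left hgap hC]
    calc ε ^ 2 / (4 * n) = (ε * n / 2) ^ 2 / (n : ℝ) ^ 3 := by field_simp; ring
      _ ≤ a (j + 1) ^ 2 / ((j : ℝ) + 1) ^ 3 := by gcongr
  calc (K : ℝ) * (ε ^ 2 / (4 * n)) = (Finset.Ico (n - K) n).card • (ε ^ 2 / (4 * n)) := by
        simp [Nat.card_Ico, hKn]
    _ ≤ _ := Finset.card_nsmul_le_sum _ _ _ hterm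

theorem tendsto_div_natCast_of_summable_sq_div_cube {a : ℕ → ℝ} {C : ℝ} (ha : ∀ n, 0 ≤ a n)
    (hstep : ∀ n, a (n + 1) ≤ a n + C)
    (hsum : Summable fun n : ℕ => a (n + 1) ^ 2 / ((n : ℝ) + 1) ^ 3) :
    Tendsto (fun n : ℕ => a n / n) atTop (nhds 0) := by
  obtain ⟨C, hC, hstep⟩ : ∃ C' > 0, ∀ n, a (n + 1) ≤ a n + C' :=
    ⟨max C 1, by positivity, fun n => (hstep n).trans (by gcongr; exact le_max_left _ _)⟩
  refine tendsto_order.2 ⟨fun b hb => .of_forall fun n => hb.trans_le (by have := ha n; positivity),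
    fun ε' hε' => ?_⟩
  by_contra hfreq
  set ε := min ε' C
  have hε : 0 < ε := lt_min hε' hC
  obtain ⟨s, hs⟩ := hsum.vanishing (Iio_mem_nhds (by positivity : 0 < ε ^ 3 / (16 * C)))
  obtain ⟨A, hA⟩ := s.exists_nat_subset_range
  obtain ⟨n, hn, hAn, hCn⟩ := ((not_eventually.1 hfreq).and_eventually
    ((eventually_ge_atTop (2 * A)).and (eventually_ge_atTop ⌈2 * C / ε⌉₊))).exists
  have hCn : 2 * C / ε ≤ n := Nat.ceil_le.1 hCn
  have hn_pos : (0 : ℝ) < n := lt_of_lt_of_le (by positivity) hCn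
  have han : ε * n ≤ a n := by
    rw [not_lt, le_div_iff₀ hn_pos] at hn
    exact (mul_le_mul_of_nonneg_right (min_le_left _ _) hn_pos.le).trans hn
  set K := ⌈ε * n / (4 * C)⌉₊
  have hK_ge : ε * n / (4 * C) ≤ K := Nat.le_ceil _
  have hK_le : (K : ℝ) ≤ ε * n / (2 * C) := by
    refine (Nat.ceil_le_two_mul ?_).trans (le_of_eq (by ring))
    rw [div_le_iff₀ hε] at hCn
    rw [le_div_iff₀ (by positivity)]
    linarith
  have hKn : 2 * K ≤ n := by
    have : ε * n / (2 * C) ≤ n / 2 := by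
      rw [div_le_div_iff₀ (by positivity) two_pos]
      nlinarith [min_le_right ε' C]
    exact_mod_cast (by linarith : (2 * K : ℝ) ≤ n)
  have hdisj : Disjoint (Finset.Ico (n - K) n) s :=
    disjoint_of_subset_right hA (disjoint_left.2 fun j hj hj' => by
      simp only [Finset.mem_Ico, Finset.mem_range] at hj hj'; omega)
  have hlow := natCast_mul_le_sum_Ico_sq_div_cube (K := K) hC.le hε.le hstep han (by omega) (by
    calc C * K ≤ C * (ε * n / (2 * C)) := by gcongr
      _ = ε * n / 2 := by field_simp)
  have hc : ε ^ 3 / (16 * C) ≤ K * (ε ^ 2 / (4 * n)) := by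
    calc ε ^ 3 / (16 * C) = ε * n / (4 * C) * (ε ^ 2 / (4 * n)) := by field_simp; ring
      _ ≤ K * (ε ^ 2 / (4 * n)) := by gcongr
  exact (hs _ hdisj).not_ge (hc.trans hlow)

theorem ae_summable_of_summable_integral {X : Type*} [MeasurableSpace X] {μ : Measure X}
    {F : ℕ → X → ℝ} (hF : ∀ n, 0 ≤ᵐ[μ] F n) (hFi : ∀ n, Integrable (F n) μ)
    (hs : Summable fun n => ∫ x, F n x ∂μ) : ∀ᵐ x ∂μ, Summable fun n => F n x := by
  have heLp : ∀ n, eLpNorm (F n) 1 μ = ENNReal.ofReal (∫ x, F n x ∂μ) := fun n => by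
    rw [eLpNorm_one_eq_lintegral_enorm, ofReal_integral_eq_lintegral_ofReal (hFi n) (hF n)]
    refine lintegral_congr_ae ?_
    filter_upwards [hF n] with x hx
    exact Real.enorm_of_nonneg hx
  have hfin : ∑' n, eLpNorm (F n) 1 μ ≠ ⊤ := by
    simp_rw [heLp]
    rw [← ENNReal.ofReal_tsum_of_nonneg (fun n => integral_nonneg_of_ae (hF n)) hs]
    exact ENNReal.ofReal_ne_top
  filter_upwards [summable_norm_of_tsum_eLpNorm_ne_top le_rfl (fun n => (hFi n).1) hfin] with x hx
  exact hx.of_norm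

/-- Weighted Birkhoff ergodic theorem under the DEL-condition, for `f ∈ L^∞`. -/
theorem weighted_birkhoff_DEL
    {X : Type*} [MeasurableSpace X] (ν : Measure X) [IsProbabilityMeasure ν]
    (T : X → X) (hT : MeasurePreserving T ν ν)
    (f : X → ℂ) (hf : Measurable f) (B : ℝ) (hfB : ∀ x, ‖f x‖ ≤ B)
    (w : ℕ → ℂ) (hw : ∃ Bw : ℝ, ∀ n, ‖w n‖ ≤ Bw)
    (hDEL : Summable fun n : ℕ =>
      (⨆ t : Set.Icc (0 : ℝ) 1,
        ‖∑ k ∈ Finset.range (n + 1), w k * Complex.exp (2 * π * Complex.I * k * t.1)‖ ^ 2) /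
      ((n : ℝ) + 1) ^ 3) :
    ∀ᵐ x ∂ν, Tendsto
      (fun N : ℕ => (N : ℂ)⁻¹ • ∑ n ∈ Finset.range N, w n * f (T^[n] x))
      atTop (nhds 0) := by
  obtain ⟨Bw, hBw⟩ := hw
  have hf2 : MemLp f 2 ν := .of_bound hf.aestronglyMeasurable B (.of_forall hfB)
  set S : ℕ → X → ℂ := fun N x => ∑ n ∈ range N, w n * f (T^[n] x)
  have hsum : ∀ᵐ x ∂ν, Summable fun n : ℕ => ‖S (n + 1) x‖ ^ 2 / ((n : ℝ) + 1) ^ 3 := by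
    refine ae_summable_of_summable_integral (fun n => .of_forall fun x => by positivity)
      (fun n => (memLp_sum_mul_iterate hT hf2 w _).norm.integrable_sq.div_const _)
      (.of_nonneg_of_le (fun n => integral_nonneg fun x => by positivity) (fun n => ?_)
        (hDEL.mul_right (∫ x, ‖f x‖ ^ 2 ∂ν)))
    rw [integral_div, div_mul_eq_mul_div]
    gcongr
    exact integral_norm_sq_sum_mul_iterate_le hT hf2 w (n + 1)
      (norm_sq_sum_mul_fourier_neg_le_iSup w (n + 1))
  filter_upwards [hsum] with x hx
  have hstep : ∀ n, ‖S (n + 1) x‖ ≤ ‖S n x‖ + Bw * B := fun n => by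
    calc ‖S (n + 1) x‖ ≤ ‖S n x‖ + ‖w n‖ * ‖f (T^[n] x)‖ := by
          simp only [S, sum_range_succ, ← norm_mul]
          exact norm_add_le _ _
      _ ≤ ‖S n x‖ + Bw * B := add_le_add le_rfl
          (mul_le_mul (hBw n) (hfB _) (norm_nonneg _) ((norm_nonneg _).trans (hBw 0)))
  rw [tendsto_zero_iff_norm_tendsto_zero]
  refine (tendsto_div_natCast_of_summable_sq_div_cube (a := fun N => ‖S N x‖)
    (fun n => norm_nonneg _) hstep hx).congr fun N => ?_
  rw [norm_smul, norm_inv, Complex.norm_natCast, div_eq_inv_mul]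
end

section
/- Let q ≥ 2 and f: ℕ → 𝕌 be q-multiplicative. Suppose there exist C ≥ 1 and 1/2 ≤ β < 1 such that max_{x∈ℝ} |∑_{n=0}^{N-1} f(n) e^{2πi n x}| ≤ C N^β for all N ≥ 1. Then there exists D > 0 such that for all integers 0 ≤ M ≤ N and all x ∈ ℝ, |∑_{n=M}^{N-1} f(n) e^{2πi n x}| ≤ D (N−M)^β. -/
open Finset Real

/-- A function `f : ℕ → ℂ` is `q`-multiplicative. -/
def QMultiplicative (q : ℕ) (f : ℕ → ℂ) : Prop :=
  ∀ m a b : ℕ, 1 ≤ m → b < q ^ m → f (a * q ^ m + b) = f (a * q ^ m) * f b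

/-!
Twisting by `n ↦ e(nx)` preserves `q`-multiplicativity. Hence on a block `[c q^j, (c + 1) q^j)`
the twisted sum over any subinterval is a unimodular multiple of the sum over the corresponding
subinterval of `[0, q^j)`, a difference of two initial sums, so it is at most `2 C (q^j)^β`.
Choosing `q^j ≤ N - M < q^(j+1)`, the interval `[M, N)` meets at most `q + 1` blocks, which gives
`D = 2 (q + 1) C`.
-/

section Blocks

variable {E : Type*} [SeminormedAddCommGroup E] {g : ℕ → E} {B : ℝ}

theorem norm_sum_Ico_le_two_mul_of_norm_sum_range_le {P : ℕ}
    (h : ∀ v ≤ P, ‖∑ n ∈ range v, g n‖ ≤ B) {u v : ℕ} (huv : u ≤ v) (hv : v ≤ P) :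
    ‖∑ n ∈ Ico u v, g n‖ ≤ 2 * B := by
  rw [sum_Ico_eq_sub _ huv, two_mul]
  exact (norm_sub_le _ _).trans (add_le_add (h v hv) (h u (huv.trans hv)))

variable {P : ℕ} (hP : 0 < P)
  (hB : ∀ c u v, u ≤ v → v ≤ P → ‖∑ n ∈ Ico (c * P + u) (c * P + v), g n‖ ≤ B)
include hP hB

theorem norm_sum_Ico_le_of_div_eq {M N : ℕ} (hMN : M ≤ N) (hdiv : N / P = M / P) :
    ‖∑ n ∈ Ico M N, g n‖ ≤ B := by
  have hM := (Nat.div_add_mod' M P).symm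
  have hN := (Nat.div_add_mod' N P).symm
  rw [hdiv] at hN
  rw [hM, hN] at hMN ⊢
  exact hB _ _ _ (Nat.le_of_add_le_add_left hMN) (Nat.mod_lt _ hP).le

theorem norm_sum_Ico_le_of_div_le_add (k : ℕ) {M N : ℕ} (hMN : M ≤ N)
    (hk : N / P ≤ M / P + k) : ‖∑ n ∈ Ico M N, g n‖ ≤ (k + 1) * B := by
  have hB0 : 0 ≤ B := by simpa using hB 0 0 0 le_rfl (Nat.zero_le _)
  induction k generalizing M with
  | zero =>
    simpa using norm_sum_Ico_le_of_div_eq hP hB hMN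
      (le_antisymm (by simpa using hk) (Nat.div_le_div_right hMN))
  | succ k ih =>
    rcases (Nat.div_le_div_right (c := P) hMN).eq_or_lt with hdiv | hlt
    · calc ‖∑ n ∈ Ico M N, g n‖ ≤ B := norm_sum_Ico_le_of_div_eq hP hB hMN hdiv.symm
        _ ≤ (↑(k + 1) + 1) * B := by
          refine le_mul_of_one_le_left hB0 ?_
          norm_cast
          omega
    · have hMM' : M ≤ (M / P + 1) * P := by rw [add_one_mul]; exact (Nat.lt_div_mul_add hP).le
      set M' := (M / P + 1) * P
      have hM'N : M' ≤ N := (Nat.mul_le_mul_right P hlt).trans (Nat.div_mul_le_self N P)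
      have hM'div : M' / P = M / P + 1 := Nat.mul_div_cancel _ hP
      have hfirst : ‖∑ n ∈ Ico M M', g n‖ ≤ B := by
        have := hB (M / P) (M % P) P (Nat.mod_lt _ hP).le le_rfl
        rwa [Nat.div_add_mod', ← add_one_mul] at this
      rw [← sum_Ico_consecutive _ hMM' hM'N]
      calc _ ≤ ‖∑ n ∈ Ico M M', g n‖ + ‖∑ n ∈ Ico M' N, g n‖ := norm_add_le _ _
        _ ≤ B + (k + 1) * B := add_le_add hfirst (ih hM'N (by omega))
        _ = (↑(k + 1) + 1) * B := by push_cast; ring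

end Blocks

namespace QMultiplicative

variable {q : ℕ} {f g : ℕ → ℂ}

theorem mul (hf : QMultiplicative q f) (hg : QMultiplicative q g) :
    QMultiplicative q (fun n => f n * g n) := fun m a b hm hb => by
  beta_reduce
  rw [hf m a b hm hb, hg m a b hm hb]
  ring

theorem map_zero (hq : 0 < q) (hf : QMultiplicative q f) (h0 : f 0 ≠ 0) : f 0 = 1 := by
  have h := hf 1 0 0 le_rfl (by simpa using hq)
  simp only [zero_mul, add_zero] at h
  exact (mul_eq_left₀ h0).mp h.symm

theorem map_mul_pow_add (hq : 0 < q) (hf : QMultiplicative q f) (h0 : f 0 ≠ 0) (a : ℕ)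
    {m b : ℕ} (hb : b < q ^ m) : f (a * q ^ m + b) = f (a * q ^ m) * f b := by
  rcases m with _ | m
  · obtain rfl : b = 0 := by simpa using hb
    simp [hf.map_zero hq h0]
  · exact hf _ a b m.succ_pos hb

theorem sum_Ico_mul_pow_add (hq : 0 < q) (hf : QMultiplicative q f) (h0 : f 0 ≠ 0)
    (a : ℕ) {m u v : ℕ} (hv : v ≤ q ^ m) :
    ∑ n ∈ Ico (a * q ^ m + u) (a * q ^ m + v), f n = f (a * q ^ m) * ∑ n ∈ Ico u v, f n := by
  rw [← map_add_left_Ico, sum_map, mul_sum]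
  exact sum_congr rfl fun b hb => hf.map_mul_pow_add hq h0 a ((mem_Ico.mp hb).2.trans_le hv)

theorem norm_sum_Ico_le (hq : 2 ≤ q) (hf : QMultiplicative q f) (hmod : ∀ n, ‖f n‖ = 1)
    {C β : ℝ} (hC : 0 ≤ C) (hβ : 0 ≤ β) (hsum : ∀ v : ℕ, ‖∑ n ∈ range v, f n‖ ≤ C * v ^ β)
    (M L : ℕ) : ‖∑ n ∈ Ico M (M + L), f n‖ ≤ 2 * (q + 1) * C * (L : ℝ) ^ β := by
  rcases L.eq_zero_or_pos with rfl | hL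
  · simp only [add_zero, Ico_self, sum_empty, norm_zero]
    positivity
  have hf0 : f 0 ≠ 0 := norm_ne_zero_iff.mp (by simp [hmod])
  set P := q ^ Nat.log q L
  have hP : 0 < P := by positivity
  have hPL : P ≤ L := Nat.pow_log_le_self q hL.ne'
  have hLP : L < P * q := by rw [← pow_succ]; exact Nat.lt_pow_succ_log_self hq L
  have hblock : ∀ c u v, u ≤ v → v ≤ P →
      ‖∑ n ∈ Ico (c * P + u) (c * P + v), f n‖ ≤ 2 * (C * (L : ℝ) ^ β) := by
    intro c u v huv hv
    rw [hf.sum_Ico_mul_pow_add (by omega) hf0 c hv, norm_mul, hmod, one_mul]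
    refine norm_sum_Ico_le_two_mul_of_norm_sum_range_le (fun w hw => ?_) huv hv
    calc ‖∑ n ∈ range w, f n‖ ≤ C * (w : ℝ) ^ β := hsum w
      _ ≤ C * (L : ℝ) ^ β := by gcongr; exact_mod_cast hw.trans hPL
  have hcount : (M + L) / P ≤ M / P + q := by
    have : L / P < q := Nat.div_lt_of_lt_mul hLP
    have := Nat.add_div_le_div_add_div_add_one M L P
    omega
  calc ‖∑ n ∈ Ico M (M + L), f n‖ ≤ (q + 1) * (2 * (C * (L : ℝ) ^ β)) :=
        norm_sum_Ico_le_of_div_le_add hP hblock q (Nat.le_add_right M L) hcount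
    _ = 2 * (q + 1) * C * (L : ℝ) ^ β := by ring

end QMultiplicative

theorem qMultiplicative_exp_two_pi_I_mul (q : ℕ) (x : ℝ) :
    QMultiplicative q (fun n : ℕ => Complex.exp (2 * π * Complex.I * n * x)) :=
  fun m a b _ _ => by
    rw [← Complex.exp_add]
    push_cast
    ring_nf

theorem norm_exp_two_pi_I_mul (n : ℕ) (x : ℝ) : ‖Complex.exp (2 * π * Complex.I * n * x)‖ = 1 := by
  rw [show 2 * π * Complex.I * n * x = ((2 * π * n * x : ℝ) : ℂ) * Complex.I by push_cast; ring,
    Complex.norm_exp_ofReal_mul_I]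

theorem gelfond_implies_strong_gelfond_general (q : ℕ) (hq : 2 ≤ q) (f : ℕ → ℂ)
    (hf : QMultiplicative q f) (hmod : ∀ n, ‖f n‖ = 1)
    (C β : ℝ) (hC : 1 ≤ C) (hβ : 1 / 2 ≤ β)
    (hgel : ∀ N : ℕ, 1 ≤ N → ∀ x : ℝ,
      ‖∑ n ∈ Finset.range N, f n * Complex.exp (2 * π * Complex.I * n * x)‖ ≤
        C * (N : ℝ) ^ β) :
    ∃ D : ℝ, 0 < D ∧ ∀ M N : ℕ, M ≤ N → ∀ x : ℝ,
      ‖∑ n ∈ Finset.Ico M N, f n * Complex.exp (2 * π * Complex.I * n * x)‖ ≤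
        D * ((N : ℝ) - M) ^ β := by
  refine ⟨2 * (q + 1) * C, by positivity, fun M N hMN x => ?_⟩
  obtain ⟨L, rfl⟩ := Nat.exists_eq_add_of_le hMN
  have hsum : ∀ v : ℕ,
      ‖∑ n ∈ range v, f n * Complex.exp (2 * π * Complex.I * n * x)‖ ≤ C * (v : ℝ) ^ β := by
    intro v
    rcases v.eq_zero_or_pos with rfl | hv
    · simp only [range_zero, sum_empty, norm_zero, Nat.cast_zero]
      positivity
    · exact hgel v hv x
  have hbound := (hf.mul (qMultiplicative_exp_two_pi_I_mul q x)).norm_sum_Ico_le hq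
    (fun n => by rw [norm_mul, hmod, norm_exp_two_pi_I_mul, one_mul]) (by linarith)
    (by linarith) hsum M L
  simpa using hbound

/-- For `q`-multiplicative unimodular sequences, the Gelfond property implies
the strong Gelfond property. -/
theorem gelfond_implies_strong_gelfond (q : ℕ) (hq : 2 ≤ q) (f : ℕ → ℂ)
    (hf : QMultiplicative q f) (hmod : ∀ n, ‖f n‖ = 1)
    (C β : ℝ) (hC : 1 ≤ C) (hβ : 1 / 2 ≤ β) (hβ1 : β < 1)
    (hgel : ∀ N : ℕ, 1 ≤ N → ∀ x : ℝ,
      ‖∑ n ∈ Finset.range N, f n * Complex.exp (2 * π * Complex.I * n * x)‖ ≤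
        C * (N : ℝ) ^ β) :
    ∃ D : ℝ, 0 < D ∧ ∀ M N : ℕ, M ≤ N → ∀ x : ℝ,
      ‖∑ n ∈ Finset.Ico M N, f n * Complex.exp (2 * π * Complex.I * n * x)‖ ≤
        D * ((N : ℝ) - M) ^ β :=
  gelfond_implies_strong_gelfond_general q hq f hf hmod C β hC hβ hgel
end

section
/- Let t_n = (−1)^{s₂(n)} be the Thue–Morse sequence. For all N ≥ 1 and x ∈ ℝ, |∑_{n=0}^{N-1} t_n e^{2πi n x}| ≤ C N^{log 3 / log 4} for some absolute constant C > 0. -/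
open Finset Real

/-! With `F_N(z) = ∑_{n<N} t_n zⁿ`, the relations `t_{2n} = t_n`, `t_{2n+1} = -t_n` give
`F_{2M}(z) = (1 - z) F_M(z²)`, so halving `N` costs a factor `|1 - z|` and an additive
error of at most `1`; after `k ≈ log₂ N` halvings,
`|F_N(z)| ≤ ∑_{j ≤ k} ∏_{i<j} |1 - z^{2^i}|` whenever `|z| ≤ 1`. Two consecutive factors
`a = |1 - z|`, `b = |1 - z²|` satisfy `b² ≤ a²(4 - a²)`, hence `a⁴b² ≤ q³(4 - q) ≤ 27` with
`q = a²`, so the products grow like `√3^j`, and `√3^k = (2^k)^{log 3 / log 4}`. -/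

namespace Gelfond

noncomputable def thueMorse (n : ℕ) : ℂ := (-1) ^ (Nat.digits 2 n).sum

lemma thueMorse_two_mul (n : ℕ) : thueMorse (2 * n) = thueMorse n := by
  rcases eq_or_ne n 0 with rfl | hn
  · rfl
  · simpa [thueMorse] using congrArg (fun l : List ℕ => (-1 : ℂ) ^ l.sum)
      (Nat.digits_add 2 one_lt_two 0 n two_pos (Or.inr hn))

lemma thueMorse_two_mul_add_one (n : ℕ) : thueMorse (2 * n + 1) = -thueMorse n := by
  have h := Nat.digits_add 2 one_lt_two 1 n one_lt_two (Or.inl one_ne_zero)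
  rw [thueMorse, thueMorse, add_comm, h, List.sum_cons, pow_add, pow_one, neg_one_mul]

lemma norm_thueMorse (n : ℕ) : ‖thueMorse n‖ = 1 := by
  simp [thueMorse]

noncomputable def thueMorseSum (N : ℕ) (z : ℂ) : ℂ := ∑ n ∈ range N, thueMorse n * z ^ n

lemma thueMorseSum_succ (N : ℕ) (z : ℂ) :
    thueMorseSum (N + 1) z = thueMorseSum N z + thueMorse N * z ^ N :=
  sum_range_succ _ _

lemma thueMorseSum_two_mul (M : ℕ) (z : ℂ) :
    thueMorseSum (2 * M) z = (1 - z) * thueMorseSum M (z ^ 2) := by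
  induction M with
  | zero => simp [thueMorseSum]
  | succ M ih =>
    rw [show 2 * (M + 1) = 2 * M + 1 + 1 by ring, thueMorseSum_succ, thueMorseSum_succ, ih,
      thueMorseSum_succ, thueMorse_two_mul_add_one, thueMorse_two_mul]
    ring

lemma norm_thueMorseSum_le_div_two {z : ℂ} (hz : ‖z‖ ≤ 1) (N : ℕ) :
    ‖thueMorseSum N z‖ ≤ ‖1 - z‖ * ‖thueMorseSum (N / 2) (z ^ 2)‖ + 1 := by
  obtain ⟨M, rfl | rfl⟩ := Nat.even_or_odd' N
  · rw [Nat.mul_div_cancel_left M two_pos, thueMorseSum_two_mul, norm_mul]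
    exact le_add_of_nonneg_right zero_le_one
  · have hterm : ‖thueMorse (2 * M) * z ^ (2 * M)‖ ≤ 1 := by
      rw [norm_mul, norm_thueMorse, one_mul, norm_pow]
      exact pow_le_one₀ (norm_nonneg z) hz
    rw [show (2 * M + 1) / 2 = M by omega, thueMorseSum_succ, thueMorseSum_two_mul, ← norm_mul]
    exact (norm_add_le _ _).trans (add_le_add_right hterm _)

noncomputable def dyadicProd (k : ℕ) (z : ℂ) : ℝ := ∏ i ∈ range k, ‖1 - z ^ 2 ^ i‖

lemma dyadicProd_zero (z : ℂ) : dyadicProd 0 z = 1 := prod_range_zero _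

lemma dyadicProd_succ (k : ℕ) (z : ℂ) :
    dyadicProd (k + 1) z = ‖1 - z‖ * dyadicProd k (z ^ 2) := by
  rw [dyadicProd, prod_range_succ', pow_zero, pow_one, mul_comm]
  congr 1
  exact prod_congr rfl fun i _ => by rw [pow_succ', pow_mul]

lemma norm_thueMorseSum_le_sum_dyadicProd {z : ℂ} (hz : ‖z‖ ≤ 1) {k N : ℕ}
    (hN : N ≤ 2 ^ k) :
    ‖thueMorseSum N z‖ ≤ ∑ j ∈ range (k + 1), dyadicProd j z := by
  induction k generalizing N z with
  | zero => interval_cases N <;> simp [thueMorseSum, dyadicProd, thueMorse]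
  | succ k ih =>
    have hz2 : ‖z ^ 2‖ ≤ 1 := by rw [norm_pow]; exact pow_le_one₀ (norm_nonneg z) hz
    calc ‖thueMorseSum N z‖ ≤ ‖1 - z‖ * ‖thueMorseSum (N / 2) (z ^ 2)‖ + 1 :=
          norm_thueMorseSum_le_div_two hz N
      _ ≤ ‖1 - z‖ * ∑ j ∈ range (k + 1), dyadicProd j (z ^ 2) + 1 := by
        gcongr
        exact ih hz2 (by rw [pow_succ] at hN; omega)
      _ = ∑ j ∈ range (k + 1 + 1), dyadicProd j z := by
        rw [sum_range_succ' (fun j => dyadicProd j z), dyadicProd_zero, mul_sum]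
        simp only [dyadicProd_succ]

lemma norm_one_sub_le_two {z : ℂ} (hz : ‖z‖ ≤ 1) : ‖1 - z‖ ≤ 2 :=
  (norm_sub_le 1 z).trans (by rw [norm_one]; linarith)

lemma norm_one_sub_sq_sq_le {z : ℂ} (hz : ‖z‖ ≤ 1) :
    ‖1 - z ^ 2‖ ^ 2 ≤ ‖1 - z‖ ^ 2 * (4 - ‖1 - z‖ ^ 2) := by
  have hpar := parallelogram_law_with_norm ℝ (1 : ℂ) z
  rw [norm_one] at hpar
  have h1 : ‖1 + z‖ ^ 2 ≤ 4 - ‖1 - z‖ ^ 2 := by nlinarith [norm_nonneg z]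
  rw [show 1 - z ^ 2 = (1 - z) * (1 + z) by ring, norm_mul, mul_pow]
  exact mul_le_mul_of_nonneg_left h1 (sq_nonneg _)

lemma cube_mul_four_sub_le (q : ℝ) : q ^ 3 * (4 - q) ≤ 27 := by
  nlinarith [mul_nonneg (sq_nonneg (q - 3)) (sq_nonneg (q + 1)), sq_nonneg (q - 3)]

lemma norm_one_sub_pow_four_mul_le {z : ℂ} (hz : ‖z‖ ≤ 1) :
    ‖1 - z‖ ^ 4 * ‖1 - z ^ 2‖ ^ 2 ≤ 27 :=
  calc ‖1 - z‖ ^ 4 * ‖1 - z ^ 2‖ ^ 2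
      ≤ ‖1 - z‖ ^ 4 * (‖1 - z‖ ^ 2 * (4 - ‖1 - z‖ ^ 2)) := by
        gcongr
        exact norm_one_sub_sq_sq_le hz
    _ = (‖1 - z‖ ^ 2) ^ 3 * (4 - ‖1 - z‖ ^ 2) := by ring
    _ ≤ 27 := cube_mul_four_sub_le _

lemma dyadicProd_succ_pow_six_le {z : ℂ} (hz : ‖z‖ ≤ 1) (k : ℕ) :
    dyadicProd (k + 1) z ^ 6 ≤ 27 ^ (k + 1) * ‖1 - z‖ ^ 2 := by
  induction k generalizing z with
  | zero =>
    rw [dyadicProd_succ, dyadicProd_zero, mul_one]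
    calc ‖1 - z‖ ^ 6 = ‖1 - z‖ ^ 4 * ‖1 - z‖ ^ 2 := by ring
      _ ≤ 2 ^ 4 * ‖1 - z‖ ^ 2 := by gcongr; exact norm_one_sub_le_two hz
      _ ≤ 27 ^ (0 + 1) * ‖1 - z‖ ^ 2 := by gcongr; norm_num
  | succ k ih =>
    have hz2 : ‖z ^ 2‖ ≤ 1 := by rw [norm_pow]; exact pow_le_one₀ (norm_nonneg z) hz
    calc dyadicProd (k + 1 + 1) z ^ 6 = ‖1 - z‖ ^ 6 * dyadicProd (k + 1) (z ^ 2) ^ 6 := by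
          rw [dyadicProd_succ, mul_pow]
      _ ≤ ‖1 - z‖ ^ 6 * (27 ^ (k + 1) * ‖1 - z ^ 2‖ ^ 2) := by gcongr; exact ih hz2
      _ = 27 ^ (k + 1) * ‖1 - z‖ ^ 2 * (‖1 - z‖ ^ 4 * ‖1 - z ^ 2‖ ^ 2) := by ring
      _ ≤ 27 ^ (k + 1) * ‖1 - z‖ ^ 2 * 27 := by gcongr; exact norm_one_sub_pow_four_mul_le hz
      _ = 27 ^ (k + 1 + 1) * ‖1 - z‖ ^ 2 := by ring

lemma dyadicProd_le {z : ℂ} (hz : ‖z‖ ≤ 1) (k : ℕ) : dyadicProd k z ≤ 2 * √3 ^ k := by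
  cases k with
  | zero => simp [dyadicProd]
  | succ k =>
    have h6 : √3 ^ 6 = 27 := by
      rw [show 6 = 2 * 3 by rfl, pow_mul, Real.sq_sqrt (by norm_num)]
      norm_num
    refine le_of_pow_le_pow_left₀ (n := 6) (by norm_num) (by positivity) ?_
    calc dyadicProd (k + 1) z ^ 6 ≤ 27 ^ (k + 1) * ‖1 - z‖ ^ 2 :=
          dyadicProd_succ_pow_six_le hz k
      _ ≤ 27 ^ (k + 1) * 2 ^ 2 := by gcongr; exact norm_one_sub_le_two hz
      _ ≤ (2 * √3 ^ (k + 1)) ^ 6 := by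
        rw [mul_pow, ← pow_mul, mul_comm (k + 1), pow_mul, h6]
        linarith [pow_pos (by norm_num : (0 : ℝ) < 27) (k + 1)]

lemma sum_two_mul_sqrt_three_pow_le (k : ℕ) :
    ∑ j ∈ range (k + 1), 2 * √3 ^ j ≤ 6 * √3 ^ k := by
  have h : (3 : ℝ) / 2 ≤ √3 := by
    rw [Real.le_sqrt (by norm_num) (by norm_num)]; norm_num
  induction k with
  | zero => norm_num
  | succ k ih =>
    rw [sum_range_succ, pow_succ]
    nlinarith [pow_nonneg (Real.sqrt_nonneg 3) k]

theorem norm_thueMorseSum_le_sqrt_three_pow {z : ℂ} (hz : ‖z‖ ≤ 1) {k N : ℕ}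
    (hN : N ≤ 2 ^ k) :
    ‖thueMorseSum N z‖ ≤ 6 * √3 ^ k :=
  calc ‖thueMorseSum N z‖ ≤ ∑ j ∈ range (k + 1), dyadicProd j z :=
        norm_thueMorseSum_le_sum_dyadicProd hz hN
    _ ≤ ∑ j ∈ range (k + 1), 2 * √3 ^ j := sum_le_sum fun j _ => dyadicProd_le hz j
    _ ≤ 6 * √3 ^ k := sum_two_mul_sqrt_three_pow_le k

lemma two_rpow_log_three_div_log_four : (2 : ℝ) ^ (log 3 / log 4) = √3 := by
  rw [eq_comm, Real.sqrt_eq_iff_eq_sq (by norm_num) (by positivity),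
    Real.rpow_pow_comm zero_le_two]
  norm_num
  exact (Real.rpow_logb (by norm_num) (by norm_num) (by norm_num)).symm

end Gelfond

/-- Gelfond's theorem: the exponential sums of the Thue–Morse sequence
`t_n = (-1)^{s₂(n)}` are `O(N^{log 3 / log 4})`, uniformly in `x`. -/
theorem gelfond_thue_morse :
    ∃ C : ℝ, 0 < C ∧ ∀ N : ℕ, 1 ≤ N → ∀ x : ℝ,
      ‖∑ n ∈ Finset.range N,
          ((-1 : ℂ) ^ (Nat.digits 2 n).sum) * Complex.exp (2 * π * Complex.I * n * x)‖ ≤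
        C * (N : ℝ) ^ (Real.log 3 / Real.log 4) := by
  refine ⟨6 * √3, by positivity, fun N hN x => ?_⟩
  set w := Complex.exp (2 * π * Complex.I * x)
  set k := Nat.log 2 N + 1
  have hNk : N ≤ 2 ^ k := (Nat.lt_pow_succ_log_self one_lt_two N).le
  have hkN : 2 ^ k ≤ 2 * N := by
    rw [pow_succ']
    exact Nat.mul_le_mul_left 2 (Nat.pow_log_le_self 2 (by omega))
  have hw : ‖w‖ = 1 := by simp [w, Complex.norm_exp]
  have hsum : ∑ n ∈ range N, (-1 : ℂ) ^ (Nat.digits 2 n).sum *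
      Complex.exp (2 * π * Complex.I * n * x) = Gelfond.thueMorseSum N w :=
    sum_congr rfl fun n _ => by
      rw [← Complex.exp_nat_mul, Gelfond.thueMorse]
      ring_nf
  calc _ = ‖Gelfond.thueMorseSum N w‖ := by rw [hsum]
    _ ≤ 6 * √3 ^ k := Gelfond.norm_thueMorseSum_le_sqrt_three_pow hw.le hNk
    _ = 6 * ((2 : ℝ) ^ k) ^ (log 3 / log 4) := by
      rw [← Gelfond.two_rpow_log_three_div_log_four, Real.rpow_pow_comm zero_le_two]
    _ ≤ 6 * (2 * N : ℝ) ^ (log 3 / log 4) := by gcongr; exact_mod_cast hkN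
    _ = 6 * √3 * (N : ℝ) ^ (log 3 / log 4) := by
      rw [Real.mul_rpow zero_le_two N.cast_nonneg, Gelfond.two_rpow_log_three_div_log_four,
        mul_assoc]
end
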